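/- Hölder's inequality for variable exponents: let r : Ω → ℝ be measurable with 1 < r_- ≤ r_+ < ∞ and r'(x) = r(x)/(r(x)−1) its pointwise conjugate. Then for all u ∈ L^{r(·)}(Ω) and v ∈ L^{r'(·)}(Ω), ∫_Ω |u v| dx ≤ (1/r_- + 1/r'_-) ‖u‖_{r(·)} ‖v‖_{r'(·)}. -/

import Mathlib

/-!
Young's inequality `ab ≤ a^p/p + b^q/q`, applied pointwise with `p = r(x)`, `q = r'(x)` to
`|u|/a` and `|v|/b`, and weakened to `ab ≤ a^p/r₋ + b^q/r'₋`, integrates to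
`∫ |uv| ≤ ab (ϱ_r(u/a)/r₋ + ϱ_{r'}(v/b)/r'₋) ≤ (1/r₋ + 1/r'₋) ab` whenever both modulars are at
most `1`. Taking the infimum over all such `a` and `b` gives the product of the Luxemburg norms.
-/

open MeasureTheory Filter

/-- The modular `ϱ(u) = ∫ |u|^{r(x)} dx` of a variable exponent Lebesgue space. -/
noncomputable def modular {α : Type*} [MeasurableSpace α] (μ : Measure α)
    (r u : α → ℝ) : ℝ :=
  ∫ x, |u x| ^ (r x) ∂μ

/-- The Luxemburg norm associated to the modular. -/
noncomputable def luxNorm {α : Type*} [MeasurableSpace α] (μ : Measure α)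
    (r u : α → ℝ) : ℝ :=
  sInf {l : ℝ | 0 < l ∧ modular μ r (fun x => u x / l) ≤ 1}

lemma le_csInf_mul_csInf {S T : Set ℝ} (hS : S.Nonempty) (hT : T.Nonempty)
    (hS₀ : ∀ a ∈ S, 0 ≤ a) (hT₀ : ∀ b ∈ T, 0 ≤ b) {c : ℝ}
    (h : ∀ a ∈ S, ∀ b ∈ T, c ≤ a * b) : c ≤ sInf S * sInf T := by
  have h_left : ∀ a ∈ S, c ≤ sInf T * a := fun a ha => by
    rw [mul_comm, ← smul_eq_mul, ← Real.sInf_smul_of_nonneg (hS₀ a ha)]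
    refine le_csInf hT.smul_set ?_
    rintro _ ⟨b, hb, rfl⟩
    exact h a ha b hb
  rw [mul_comm, ← smul_eq_mul, ← Real.sInf_smul_of_nonneg (Real.sInf_nonneg hT₀)]
  refine le_csInf hS.smul_set ?_
  rintro _ ⟨a, ha, rfl⟩
  exact h_left a ha

lemma div_sub_one_le_div_sub_one {m p : ℝ} (hm : 1 < m) (hmp : m ≤ p) :
    p / (p - 1) ≤ m / (m - 1) := by
  rw [div_le_div_iff₀ (by linarith) (by linarith)]
  nlinarith

lemma Real.mul_le_rpow_div_add_rpow_div {a b p q m n : ℝ} (ha : 0 ≤ a) (hb : 0 ≤ b)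
    (hpq : p.HolderConjugate q) (hm : 0 < m) (hmp : m ≤ p) (hn : 0 < n) (hnq : n ≤ q) :
    a * b ≤ a ^ p / m + b ^ q / n :=
  (Real.young_inequality_of_nonneg ha hb hpq).trans (by gcongr)

section EssInf

variable {α : Type*} [MeasurableSpace α] {μ : Measure α} {f : α → ℝ}

lemma isBoundedUnder_ge_ae_of_essInf_ne_zero (h : essInf f μ ≠ 0) :
    IsBoundedUnder (· ≥ ·) (ae μ) f := by
  by_contra hf
  have h_empty : {a : ℝ | ∀ᵐ x ∂μ, a ≤ f x} = ∅ :=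
    Set.eq_empty_of_forall_notMem fun a ha => hf ⟨a, ha⟩
  exact h (by rw [essInf, liminf_eq, h_empty, Real.sSup_empty])

lemma ae_neBot_of_essInf_ne_zero (h : essInf f μ ≠ 0) : (ae μ).NeBot := by
  rw [ae_neBot]
  rintro rfl
  exact h (by simp [essInf, liminf, limsInf])

end EssInf

section Modular

variable {α : Type*} [MeasurableSpace α] {μ : Measure α}

lemma MeasureTheory.Integrable.const_rpow_mul {s g : α → ℝ} (hg : Integrable g μ) (hs : Measurable s) {B : ℝ}
    (hs₀ : ∀ᵐ x ∂μ, 0 ≤ s x) (hsB : ∀ᵐ x ∂μ, s x ≤ B) {c : ℝ} (hc : 0 ≤ c) :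
    Integrable (fun x => c ^ s x * g x) μ := by
  refine hg.bdd_mul (c := max 1 (c ^ B)) (measurable_const.pow hs).aestronglyMeasurable ?_
  filter_upwards [hs₀, hsB] with x h₀ hB
  rw [Real.norm_of_nonneg (Real.rpow_nonneg hc _)]
  rcases le_total c 1 with h | h
  · exact (Real.rpow_le_one hc h h₀).trans (le_max_left _ _)
  · exact (Real.rpow_le_rpow_of_exponent_le h hB).trans (le_max_right _ _)

lemma integrable_abs_div_rpow {s w : α → ℝ} (hs : Measurable s) {B : ℝ}
    (hs₀ : ∀ᵐ x ∂μ, 0 ≤ s x) (hsB : ∀ᵐ x ∂μ, s x ≤ B)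
    (hw : Integrable (fun x => |w x| ^ s x) μ) (a : ℝ) :
    Integrable (fun x => |w x / a| ^ s x) μ := by
  have ha : 0 ≤ |a|⁻¹ := inv_nonneg.2 (abs_nonneg a)
  refine (hw.const_rpow_mul hs hs₀ hsB ha).congr (Eventually.of_forall fun x => ?_)
  dsimp only
  rw [abs_div, div_eq_inv_mul, Real.mul_rpow ha (abs_nonneg _)]

lemma modular_div_le {s w : α → ℝ} (hs : ∀ᵐ x ∂μ, 1 ≤ s x)
    (hw : Integrable (fun x => |w x| ^ s x) μ) {l : ℝ} (hl : 1 ≤ l) :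
    modular μ s (fun x => w x / l) ≤ modular μ s w / l := by
  have hl₀ : 0 < l := zero_lt_one.trans_le hl
  rw [modular, modular, ← integral_div]
  refine integral_mono_of_nonneg (Eventually.of_forall fun x => by positivity)
    (hw.div_const l) ?_
  filter_upwards [hs] with x hx
  rw [abs_div, Real.div_rpow (abs_nonneg _) (abs_nonneg _), abs_of_pos hl₀]
  gcongr
  exact Real.self_le_rpow_of_one_le hl hx

lemma exists_modular_div_le_one {s w : α → ℝ} (hs : ∀ᵐ x ∂μ, 1 ≤ s x)
    (hw : Integrable (fun x => |w x| ^ s x) μ) :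
    ∃ l, 0 < l ∧ modular μ s (fun x => w x / l) ≤ 1 := by
  have hl : 1 ≤ max 1 (modular μ s w) := le_max_left _ _
  refine ⟨_, zero_lt_one.trans_le hl, (modular_div_le hs hw hl).trans ?_⟩
  rw [div_le_one (zero_lt_one.trans_le hl)]
  exact le_max_right _ _

variable {r r' u v : α → ℝ} {m n : ℝ}

lemma integral_abs_mul_le_modular_div_add (hrr' : ∀ᵐ x ∂μ, (r x).HolderConjugate (r' x))
    (hm : 0 < m) (hmr : ∀ᵐ x ∂μ, m ≤ r x) (hn : 0 < n) (hnr' : ∀ᵐ x ∂μ, n ≤ r' x)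
    (hu : Integrable (fun x => |u x| ^ r x) μ) (hv : Integrable (fun x => |v x| ^ r' x) μ) :
    ∫ x, |u x * v x| ∂μ ≤ modular μ r u / m + modular μ r' v / n := by
  rw [modular, modular, ← integral_div, ← integral_div,
    ← integral_add (hu.div_const m) (hv.div_const n)]
  refine integral_mono_of_nonneg (Eventually.of_forall fun x => abs_nonneg _)
    ((hu.div_const m).add (hv.div_const n)) ?_
  filter_upwards [hrr', hmr, hnr'] with x hx hmx hnx
  rw [abs_mul]
  exact Real.mul_le_rpow_div_add_rpow_div (abs_nonneg _) (abs_nonneg _) hx hm hmx hn hnx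

lemma integral_abs_mul_le_of_modular_div_le_one
    (hrr' : ∀ᵐ x ∂μ, (r x).HolderConjugate (r' x))
    (hm : 0 < m) (hmr : ∀ᵐ x ∂μ, m ≤ r x) (hn : 0 < n) (hnr' : ∀ᵐ x ∂μ, n ≤ r' x)
    {a b : ℝ} (ha : 0 < a) (hb : 0 < b)
    (hu : Integrable (fun x => |u x / a| ^ r x) μ) (hv : Integrable (fun x => |v x / b| ^ r' x) μ)
    (hua : modular μ r (fun x => u x / a) ≤ 1) (hvb : modular μ r' (fun x => v x / b) ≤ 1) :
    ∫ x, |u x * v x| ∂μ ≤ (1 / m + 1 / n) * (a * b) := by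
  have h_scale : ∫ x, |u x * v x| ∂μ = a * b * ∫ x, |u x / a * (v x / b)| ∂μ := by
    rw [← integral_const_mul]
    congr 1 with x
    rw [abs_mul, abs_mul, abs_div, abs_div, abs_of_pos ha, abs_of_pos hb]
    field_simp
  calc ∫ x, |u x * v x| ∂μ
      ≤ a * b * (modular μ r (fun x => u x / a) / m + modular μ r' (fun x => v x / b) / n) := by
        rw [h_scale]
        gcongr
        exact integral_abs_mul_le_modular_div_add hrr' hm hmr hn hnr' hu hv
    _ ≤ a * b * (1 / m + 1 / n) := by gcongr
    _ = (1 / m + 1 / n) * (a * b) := mul_comm _ _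

-- The integrability of every rescaling matters: otherwise `modular` would take the junk value
-- `0 ≤ 1` and the infimum defining `luxNorm` would be too small.
lemma integral_abs_mul_le_mul_luxNorm_mul_luxNorm
    (hrr' : ∀ᵐ x ∂μ, (r x).HolderConjugate (r' x))
    (hm : 0 < m) (hmr : ∀ᵐ x ∂μ, m ≤ r x) (hn : 0 < n) (hnr' : ∀ᵐ x ∂μ, n ≤ r' x)
    (hu : ∀ a, Integrable (fun x => |u x / a| ^ r x) μ)
    (hv : ∀ b, Integrable (fun x => |v x / b| ^ r' x) μ) :
    ∫ x, |u x * v x| ∂μ ≤ (1 / m + 1 / n) * (luxNorm μ r u * luxNorm μ r' v) := by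
  have hr₁ : ∀ᵐ x ∂μ, 1 ≤ r x := hrr'.mono fun x hx => hx.lt.le
  have hr'₁ : ∀ᵐ x ∂μ, 1 ≤ r' x := hrr'.mono fun x hx => hx.symm.lt.le
  have hu₁ := hu 1
  have hv₁ := hv 1
  simp only [div_one] at hu₁ hv₁
  rw [mul_comm, ← div_le_iff₀ (by positivity)]
  refine le_csInf_mul_csInf (exists_modular_div_le_one hr₁ hu₁)
    (exists_modular_div_le_one hr'₁ hv₁) (fun a ha => ha.1.le) (fun b hb => hb.1.le) ?_
  rintro a ⟨ha, hua⟩ b ⟨hb, hvb⟩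
  rw [div_le_iff₀ (by positivity), mul_comm]
  exact integral_abs_mul_le_of_modular_div_le_one hrr' hm hmr hn hnr' ha hb (hu a) (hv b) hua hvb

end Modular

theorem variable_exponent_holder_general {α : Type*} [MeasurableSpace α]
    (μ : Measure α)
    (r : α → ℝ) (hr : Measurable r) (M : ℝ)
    (hr₁ : 1 < essInf r μ) (hr₂ : ∀ᵐ x ∂μ, r x ≤ M)
    (u v : α → ℝ)
    (humem : Integrable (fun x => |u x| ^ (r x)) μ)
    (hvmem : Integrable (fun x => |v x| ^ (r x / (r x - 1))) μ) :
    ∫ x, |u x * v x| ∂μ ≤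
      (1 / essInf r μ + 1 / essInf (fun x => r x / (r x - 1)) μ) *
        (luxNorm μ r u * luxNorm μ (fun x => r x / (r x - 1)) v) := by
  have hr_ne : essInf r μ ≠ 0 := by linarith
  have hr_bdd := isBoundedUnder_ge_ae_of_essInf_ne_zero hr_ne
  have := ae_neBot_of_essInf_ne_zero hr_ne
  have h_one_lt : ∀ᵐ x ∂μ, 1 < r x := ae_lt_of_lt_essInf hr₁ hr_bdd
  have h_essInf_le : ∀ᵐ x ∂μ, essInf r μ ≤ r x := ae_essInf_le hr_bdd
  have hconj : ∀ᵐ x ∂μ, (r x).HolderConjugate (r x / (r x - 1)) :=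
    h_one_lt.mono fun x hx => .conjExponent hx
  have hr'_one_le : ∀ᵐ x ∂μ, 1 ≤ r x / (r x - 1) := hconj.mono fun x hx => hx.symm.lt.le
  have hr'_le : ∀ᵐ x ∂μ, r x / (r x - 1) ≤ essInf r μ / (essInf r μ - 1) :=
    h_essInf_le.mono fun x hx => div_sub_one_le_div_sub_one hr₁ hx
  have hr'_essInf : 1 ≤ essInf (fun x => r x / (r x - 1)) μ :=
    le_essInf_of_ae_le 1 hr'_one_le (isCoboundedUnder_ge_of_eventually_le _ hr'_le)
  exact integral_abs_mul_le_mul_luxNorm_mul_luxNorm hconj (by linarith) h_essInf_le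
    (by linarith) (ae_essInf_le ⟨1, hr'_one_le⟩)
    (integrable_abs_div_rpow hr (h_one_lt.mono fun x hx => by linarith) hr₂ humem)
    (integrable_abs_div_rpow (hr.div (hr.sub_const 1))
      (hr'_one_le.mono fun x hx => by linarith) hr'_le hvmem)

/-- Hölder's inequality for variable exponent Lebesgue spaces:
`∫ |uv| ≤ (1/r₋ + 1/r'₋) ‖u‖_{r(·)} ‖v‖_{r'(·)}`, where `r'(x) = r(x)/(r(x)-1)`
is the pointwise conjugate exponent. -/
theorem variable_exponent_holder {α : Type*} [MeasurableSpace α]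
    (μ : Measure α) [IsFiniteMeasure μ]
    (r : α → ℝ) (hr : Measurable r) (M : ℝ)
    (hr₁ : 1 < essInf r μ) (hr₂ : ∀ᵐ x ∂μ, r x ≤ M)
    (u v : α → ℝ) (hu : Measurable u) (hv : Measurable v)
    (humem : Integrable (fun x => |u x| ^ (r x)) μ)
    (hvmem : Integrable (fun x => |v x| ^ (r x / (r x - 1))) μ) :
    ∫ x, |u x * v x| ∂μ ≤
      (1 / essInf r μ + 1 / essInf (fun x => r x / (r x - 1)) μ) *
        (luxNorm μ r u * luxNorm μ (fun x => r x / (r x - 1)) v) :=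
  variable_exponent_holder_general μ r hr M hr₁ hr₂ u v humem hvmem
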